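/- There exists a probability distribution p on three binary variables A, B, C, namely p(0,0,0)=3/10, p(0,0,1)=0, p(0,1,0)=2/10, p(0,1,1)=0, p(1,0,0)=1/10, p(1,0,1)=1/10, p(1,1,0)=2/10, p(1,1,1)=1/10, such that I_2(A:BC) = 9/25 < 3/8 = f(2,2,4) while I_2(A:B) = 13/50 > 1/4 = f(2,2,2). In particular, the Tsallis constraint I_q(A:BC) ≤ f(q,d_A,d_{BC}) does not imply I_q(A:B) ≤ f(q,d_A,d_B). -/

import Mathlib

open Finset

/-- Tsallis entropy of order `q` of a distribution `p` on a finite type,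
with the sum restricted to the support of `p`. -/
noncomputable def tsallisEnt {α : Type*} [Fintype α] (q : ℝ) (p : α → ℝ) : ℝ :=
  (1 / (1 - q)) * ((∑ x ∈ univ.filter (fun x => 0 < p x), p x ^ q) - 1)

/-- The bound `f(q,a,b) = (1/(q−1))·(1−a^{1−q})·(1−b^{1−q})`. -/
noncomputable def fBound (q : ℝ) (a b : ℕ) : ℝ :=
  (1 / (q - 1)) * (1 - (a : ℝ) ^ (1 - q)) * (1 - (b : ℝ) ^ (1 - q))

/-- The distribution on three binary variables `A`, `B`, `C` given by
`p(0,0,0)=3/10, p(0,0,1)=0, p(0,1,0)=2/10, p(0,1,1)=0, p(1,0,0)=1/10,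
p(1,0,1)=1/10, p(1,1,0)=2/10, p(1,1,1)=1/10`. -/
noncomputable def pABC : Fin 2 × Fin 2 × Fin 2 → ℝ := fun t =>
  if t = (0, 0, 0) then 3 / 10
  else if t = (0, 1, 0) then 2 / 10
  else if t = (1, 0, 0) then 1 / 10
  else if t = (1, 0, 1) then 1 / 10
  else if t = (1, 1, 0) then 2 / 10
  else if t = (1, 1, 1) then 1 / 10
  else 0

/-! At `q = 2` the Tsallis entropy of a distribution is one minus its collision probability
`∑ x, p x ^ 2` (for `q ≠ 0` the restriction to the support is immaterial, as `0 ^ q = 0`), and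
`f(2,a,b) = (1 - 1/a)(1 - 1/b)`, so every quantity reduces to a rational computation. -/

theorem tsallisEnt_eq_of_nonneg {α : Type*} [Fintype α] {q : ℝ} {p : α → ℝ} (hq : q ≠ 0)
    (hp : ∀ x, 0 ≤ p x) : tsallisEnt q p = (1 / (1 - q)) * (∑ x, p x ^ q - 1) := by
  rw [tsallisEnt, sum_filter]
  congr 2
  refine sum_congr rfl fun x _ => ?_
  split_ifs with hpos
  · rfl
  · rw [le_antisymm (not_lt.mp hpos) (hp x), Real.zero_rpow hq]

theorem tsallisEnt_two_eq {α : Type*} [Fintype α] {p : α → ℝ} (hp : ∀ x, 0 ≤ p x) :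
    tsallisEnt 2 p = 1 - ∑ x, p x ^ 2 := by
  rw [tsallisEnt_eq_of_nonneg two_ne_zero hp]
  simp only [Real.rpow_two]
  ring

theorem fBound_two (a b : ℕ) : fBound 2 a b = (1 - 1 / (a : ℝ)) * (1 - 1 / (b : ℝ)) := by
  simp only [fBound, show (1 : ℝ) - 2 = -1 by norm_num, Real.rpow_neg_one]
  ring

theorem pABC_nonneg (t : Fin 2 × Fin 2 × Fin 2) : 0 ≤ pABC t := by
  unfold pABC
  split_ifs <;> norm_num

theorem sum_pABC : ∑ t, pABC t = 1 := by
  simp only [Fintype.sum_prod_type, Fin.sum_univ_two, pABC]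
  norm_num [Prod.ext_iff]

theorem tsallisEnt_two_pABC : tsallisEnt 2 pABC = 4 / 5 := by
  rw [tsallisEnt_two_eq pABC_nonneg]
  simp only [Fintype.sum_prod_type, Fin.sum_univ_two, pABC]
  norm_num [Prod.ext_iff]

theorem tsallisEnt_two_marginal_A :
    tsallisEnt 2 (fun a => ∑ b, ∑ c, pABC (a, b, c)) = 1 / 2 := by
  rw [tsallisEnt_two_eq fun a => sum_nonneg fun b _ => sum_nonneg fun c _ => pABC_nonneg _]
  simp only [Fin.sum_univ_two, pABC]
  norm_num [Prod.ext_iff]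

theorem tsallisEnt_two_marginal_B :
    tsallisEnt 2 (fun b => ∑ a, ∑ c, pABC (a, b, c)) = 1 / 2 := by
  rw [tsallisEnt_two_eq fun b => sum_nonneg fun a _ => sum_nonneg fun c _ => pABC_nonneg _]
  simp only [Fin.sum_univ_two, pABC]
  norm_num [Prod.ext_iff]

theorem tsallisEnt_two_marginal_BC :
    tsallisEnt 2 (fun w : Fin 2 × Fin 2 => ∑ a, pABC (a, w.1, w.2)) = 33 / 50 := by
  rw [tsallisEnt_two_eq fun w => sum_nonneg fun a _ => pABC_nonneg _]
  simp only [Fintype.sum_prod_type, Fin.sum_univ_two, pABC]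
  norm_num [Prod.ext_iff]

theorem tsallisEnt_two_marginal_AB :
    tsallisEnt 2 (fun w : Fin 2 × Fin 2 => ∑ c, pABC (w.1, w.2, c)) = 37 / 50 := by
  rw [tsallisEnt_two_eq fun w => sum_nonneg fun c _ => pABC_nonneg _]
  simp only [Fintype.sum_prod_type, Fin.sum_univ_two, pABC]
  norm_num [Prod.ext_iff]

/-- The distribution `pABC` is a probability distribution with
`I_2(A:BC) = 9/25 < 3/8 = f(2,2,4)` and yet `I_2(A:B) = 13/50 > 1/4 = f(2,2,2)`:
the constraint `I_q(A:BC) ≤ f(q,d_A,d_{BC})` does not imply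
`I_q(A:B) ≤ f(q,d_A,d_B)`. -/
theorem tsallis_monotonicity_counterexample :
    (∀ t, 0 ≤ pABC t) ∧ (∑ t, pABC t = 1) ∧
    (tsallisEnt 2 (fun a => ∑ b, ∑ c, pABC (a, b, c))
        + tsallisEnt 2 (fun w : Fin 2 × Fin 2 => ∑ a, pABC (a, w.1, w.2))
        - tsallisEnt 2 pABC
      = 9 / 25) ∧
    ((9 : ℝ) / 25 < 3 / 8) ∧ (fBound 2 2 4 = 3 / 8) ∧
    (tsallisEnt 2 (fun a => ∑ b, ∑ c, pABC (a, b, c))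
        + tsallisEnt 2 (fun b => ∑ a, ∑ c, pABC (a, b, c))
        - tsallisEnt 2 (fun w : Fin 2 × Fin 2 => ∑ c, pABC (w.1, w.2, c))
      = 13 / 50) ∧
    ((1 : ℝ) / 4 < 13 / 50) ∧ (fBound 2 2 2 = 1 / 4) := by
  refine ⟨pABC_nonneg, sum_pABC, ?_, by norm_num, ?_, ?_, by norm_num, ?_⟩
  · rw [tsallisEnt_two_marginal_A, tsallisEnt_two_marginal_BC, tsallisEnt_two_pABC]
    norm_num
  · rw [fBound_two]
    norm_num
  · rw [tsallisEnt_two_marginal_A, tsallisEnt_two_marginal_B, tsallisEnt_two_marginal_AB]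
    norm_num
  · rw [fBound_two]
    norm_num
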